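/- Let α be a simple root, F_α = {x : α·x = 0, β·x > 0 ∀β ∈ S\{α}} the corresponding face of the Weyl chamber, and K_α = π⁻¹(F_α) = ∪_{w∈W} w(F_α). Then for every x ∈ V, α·π(x) = d(x, K_α), the Euclidean distance from x to K_α. -/

import Mathlib

open scoped RealInnerProductSpace
open Metric Set

variable {V : Type*} [NormedAddCommGroup V] [InnerProductSpace ℝ V] [FiniteDimensional ℝ V]

/-- Orthogonal reflection in the hyperplane orthogonal to the unit vector `α`. -/
noncomputable def sRefl (α x : V) : V := x - (2 * ⟪α, x⟫) • α

/-- The one-sided reflection `r_α`: identity on `{α·x ≥ 0}`, reflection on `{α·x ≤ 0}`,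
given by the concise formula `r_α(x) = x + 2(α·x)⁻ α`. -/
noncomputable def rRefl (α x : V) : V := x + (2 * max (-⟪α, x⟫) 0) • α

/-- `R` is a reduced root system of unit vectors. -/
def IsRootSystem (R : Finset V) : Prop :=
  (∀ α ∈ R, ‖α‖ = 1) ∧
  (∀ α ∈ R, ∀ t : ℝ, t • α ∈ R → t = 1 ∨ t = -1) ∧
  (∀ α ∈ R, ∀ β ∈ R, sRefl α β ∈ R)

/-- `Rpos` is a positive subsystem of `R`: the roots having positive inner product
against some vector `u` lying on no root hyperplane. -/
def IsPositiveSystem (R Rpos : Finset V) : Prop :=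
  ∃ u : V, (∀ β ∈ R, ⟪β, u⟫ ≠ 0) ∧ ∀ β, β ∈ Rpos ↔ β ∈ R ∧ 0 < ⟪β, u⟫

/-- `S` is the simple system associated with the positive subsystem `Rpos`. -/
def IsSimpleSystem (Rpos S : Finset V) : Prop :=
  S ⊆ Rpos ∧ LinearIndependent ℝ (fun x : (S : Set V) => (x : V)) ∧
  Submodule.span ℝ (S : Set V) = Submodule.span ℝ (Rpos : Set V) ∧
  ∀ β ∈ Rpos, ∃ c : V → ℝ, (∀ α ∈ S, 0 ≤ c α) ∧ β = ∑ α ∈ S, c α • α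

/-- The reflection group `W` generated by the reflections `s_α`, `α ∈ R`. -/
noncomputable def weylGroup (R : Finset V) : Subgroup (V ≃ₗᵢ[ℝ] V) :=
  Subgroup.closure {w : V ≃ₗᵢ[ℝ] V | ∃ α ∈ R, ∀ x, w x = sRefl α x}

/-- The facet associated with a sign pattern `(Ip, I0, Im)` on the positive roots. -/
def facet (Ip I0 Im : Finset V) : Set V :=
  {x | (∀ α ∈ Ip, 0 < ⟪α, x⟫) ∧ (∀ α ∈ I0, ⟪α, x⟫ = 0) ∧ (∀ α ∈ Im, ⟪α, x⟫ < 0)}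

/-- `(Ip, I0, Im)` is a partition of the positive system `Rpos`. -/
def IsFacetPartition (Rpos Ip I0 Im : Finset V) : Prop :=
  ((Ip : Set V) ∪ (I0 : Set V) ∪ (Im : Set V) = (Rpos : Set V)) ∧
  Disjoint (Ip : Set V) (I0 : Set V) ∧ Disjoint (Ip : Set V) (Im : Set V) ∧
  Disjoint (I0 : Set V) (Im : Set V)

/-- The closed positive Weyl chamber. -/
def closedChamber (S : Finset V) : Set V := {x | ∀ α ∈ S, 0 ≤ ⟪α, x⟫}

/-- The face `F_α` of the Weyl chamber, supported by the wall `H_α`. -/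
def faceF (S : Finset V) (α : V) : Set V :=
  {x | ⟪α, x⟫ = 0 ∧ ∀ β ∈ S, β ≠ α → 0 < ⟪β, x⟫}


/-!
Write `c = π x = w x` with `w ∈ W`. Pushing the orthogonal projection of `c` onto the wall
`α·z = 0` slightly into the face `F_α` (possible because `β·α ≤ 0` for the other simple roots `β`)
and pulling it back by `w⁻¹` gives points of `K_α` at distance about `α·c` from `x`.
Conversely, a point `g y` of `K_α`, with `y ∈ F_α`, is at distance `‖c - w g y‖ ≥ ‖c - y‖ ≥ α·c`
from `x`. The middle inequality is `c·(w' y) ≤ c·y` for `c, y` in the closed chamber and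
`w' ∈ W`, proved by writing `w'` as a word in the simple reflections and inducting on its length:
appending `s_β` to a word `m` either lowers `c·(m y)` by `2 (β·y) (c·m β) ≥ 0`, when `m β` is
positive, or yields a word that is no longer than `m`, by the exchange property.
-/

section InnerProductSpace

variable {E : Type*} [NormedAddCommGroup E] [InnerProductSpace ℝ E]

lemma sRefl_sRefl {r : E} (hr : ‖r‖ = 1) (x : E) : sRefl r (sRefl r x) = x := by
  simp only [sRefl, inner_sub_right, real_inner_smul_right, inner_self_eq_one_of_norm_eq_one hr]
  module

lemma sRefl_self {r : E} (hr : ‖r‖ = 1) : sRefl r r = -r := by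
  simp only [sRefl, inner_self_eq_one_of_norm_eq_one hr]
  module

lemma sRefl_neg (r x : E) : sRefl (-r) x = sRefl r x := by
  simp only [sRefl, inner_neg_left]
  module

lemma inner_sRefl_sRefl {r : E} (hr : ‖r‖ = 1) (a b : E) :
    ⟪sRefl r a, sRefl r b⟫ = ⟪a, b⟫ := by
  simp only [sRefl, inner_sub_left, inner_sub_right, real_inner_smul_left, real_inner_smul_right,
    inner_self_eq_one_of_norm_eq_one hr, real_inner_comm a r]
  ring

lemma sRefl_sRefl_eq {r : E} (hr : ‖r‖ = 1) (b x : E) :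
    sRefl r (sRefl b x) = sRefl (sRefl r b) (sRefl r x) := by
  conv_rhs => rw [sRefl, inner_sRefl_sRefl hr]
  simp only [sRefl, inner_sub_right, real_inner_smul_right]
  module

/-- `applyWord [r₁, …, rₙ] = s_{r₁} ∘ ⋯ ∘ s_{rₙ}`. -/
noncomputable def applyWord (l : List E) (x : E) : E := l.foldr sRefl x

@[simp] lemma applyWord_nil (x : E) : applyWord [] x = x := rfl

@[simp] lemma applyWord_cons (r : E) (l : List E) (x : E) :
    applyWord (r :: l) x = sRefl r (applyWord l x) := rfl

@[simp] lemma applyWord_append (l₁ l₂ : List E) (x : E) :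
    applyWord (l₁ ++ l₂) x = applyWord l₁ (applyWord l₂ x) :=
  List.foldr_append ..

lemma inner_applyWord_applyWord {l : List E} (hl : ∀ r ∈ l, ‖r‖ = 1) (a b : E) :
    ⟪applyWord l a, applyWord l b⟫ = ⟪a, b⟫ := by
  induction l with
  | nil => rfl
  | cons r l ih =>
    rw [List.forall_mem_cons] at hl
    rw [applyWord_cons, applyWord_cons, inner_sRefl_sRefl hl.1, ih hl.2]

lemma applyWord_sRefl {l : List E} (hl : ∀ r ∈ l, ‖r‖ = 1) (b x : E) :
    applyWord l (sRefl b x) = sRefl (applyWord l b) (applyWord l x) := by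
  induction l with
  | nil => rfl
  | cons r l ih =>
    rw [List.forall_mem_cons] at hl
    rw [applyWord_cons, applyWord_cons, applyWord_cons, ih hl.2, sRefl_sRefl_eq hl.1]

lemma exists_inner_eq_of_linearIndependent {S : Finset E}
    (hS : LinearIndependent ℝ (fun x : (S : Set E) => (x : E))) (f : E → ℝ) :
    ∃ v : E, ∀ β ∈ S, ⟪β, v⟫ = f β := by
  let b := Module.Basis.span hS
  let U := Submodule.span ℝ (Set.range fun x : (S : Set E) => (x : E))
  have : FiniteDimensional ℝ U := .span_of_finite ℝ (Set.finite_range _)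
  let φ : U →L[ℝ] ℝ := LinearMap.toContinuousLinearMap (b.constr ℝ fun i => f i)
  refine ⟨((InnerProductSpace.toDual ℝ U).symm φ : U), fun β hβ => ?_⟩
  have hb : (b ⟨β, hβ⟩ : E) = β := by simp [b, Module.Basis.span_apply]
  have hφ : φ (b ⟨β, hβ⟩) = f β := b.constr_basis ℝ (fun i => f i) ⟨β, hβ⟩
  rw [real_inner_comm, ← hφ, ← InnerProductSpace.toDual_symm_apply, Submodule.coe_inner, hb]

end InnerProductSpace

section RootSystem

variable {E : Type*} [NormedAddCommGroup E] [InnerProductSpace ℝ E] {R Rpos S : Finset E}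

lemma IsRootSystem.neg_mem (hR : IsRootSystem R) {r : E} (hr : r ∈ R) : -r ∈ R := by
  simpa [sRefl_self (hR.1 r hr)] using hR.2.2 r hr r hr

lemma IsPositiveSystem.subset (hpos : IsPositiveSystem R Rpos) : Rpos ⊆ R := by
  obtain ⟨u, -, hu⟩ := hpos
  exact fun r hr => ((hu r).1 hr).1

lemma IsPositiveSystem.neg_mem_iff (hpos : IsPositiveSystem R Rpos) (hR : IsRootSystem R)
    {r : E} (hr : r ∈ R) : -r ∈ Rpos ↔ r ∉ Rpos := by
  obtain ⟨u, hreg, hu⟩ := hpos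
  simp only [hu, hR.neg_mem hr, hr, inner_neg_left, neg_pos, true_and, not_lt]
  exact ⟨le_of_lt, fun h => lt_of_le_of_ne h (hreg r hr)⟩

lemma faceF_subset_closedChamber (S : Finset E) (α : E) : faceF S α ⊆ closedChamber S := by
  intro y hy β hβ
  by_cases h : β = α
  · rw [h, hy.1]
  · exact (hy.2 β hβ h).le

namespace IsSimpleSystem

lemma norm_eq_one (hS : IsSimpleSystem Rpos S) (hR : IsRootSystem R)
    (hpos : IsPositiveSystem R Rpos) {β : E} (hβ : β ∈ S) : ‖β‖ = 1 :=
  hR.1 β (hpos.subset (hS.1 hβ))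

lemma inner_nonneg (hS : IsSimpleSystem Rpos S) {r c : E} (hr : r ∈ Rpos)
    (hc : c ∈ closedChamber S) : 0 ≤ ⟪r, c⟫ := by
  obtain ⟨d, hd, rfl⟩ := hS.2.2.2 r hr
  rw [sum_inner]
  exact Finset.sum_nonneg fun β hβ => by
    rw [real_inner_smul_left]
    exact mul_nonneg (hd β hβ) (hc β hβ)

lemma exists_inner_pos (hS : IsSimpleSystem Rpos S) (hR : IsRootSystem R)
    (hpos : IsPositiveSystem R Rpos) {r : E} (hr : r ∈ Rpos) : ∃ β ∈ S, 0 < ⟪β, r⟫ := by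
  by_contra! h
  have := hS.inner_nonneg hr (c := -r) fun β hβ => by
    rw [inner_neg_right]
    linarith [h β hβ]
  rw [inner_neg_right, inner_self_eq_one_of_norm_eq_one (hR.1 r (hpos.subset hr))] at this
  linarith

lemma eq_of_smul_mem (hS : IsSimpleSystem Rpos S) (hR : IsRootSystem R)
    (hpos : IsPositiveSystem R Rpos) {β : E} (hβ : β ∈ S) {a : ℝ} (ha : a • β ∈ Rpos) :
    a • β = β := by
  have hβpos := hS.1 hβ
  rcases hR.2.1 β (hpos.subset hβpos) a (hpos.subset ha) with rfl | rfl
  · exact one_smul ℝ β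
  · rw [neg_one_smul] at ha
    exact absurd hβpos ((hpos.neg_mem_iff hR (hpos.subset hβpos)).1 ha)

lemma sRefl_mem (hS : IsSimpleSystem Rpos S) (hR : IsRootSystem R)
    (hpos : IsPositiveSystem R Rpos) {β t : E} (hβ : β ∈ S) (ht : t ∈ Rpos) (hne : t ≠ β) :
    sRefl β t ∈ Rpos := by
  classical
  by_contra hneg
  rw [← hpos.neg_mem_iff hR (hR.2.2 β (hpos.subset (hS.1 hβ)) t (hpos.subset ht))] at hneg
  -- `⟪t, v⟫ ≥ 0` and `⟪-s_β t, v⟫ = -⟪t, v⟫ ≥ 0` force `t` onto the line `ℝ β`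
  obtain ⟨v, hv⟩ := exists_inner_eq_of_linearIndependent hS.2.1 fun γ => if γ = β then 0 else 1
  have hvC : v ∈ closedChamber S := fun γ hγ => by
    rw [hv γ hγ]
    split_ifs <;> norm_num
  have hneg_nonneg := hS.inner_nonneg hneg hvC
  rw [inner_neg_left, sRefl, inner_sub_left, real_inner_smul_left, hv β hβ, if_pos rfl,
    mul_zero, sub_zero, neg_nonneg] at hneg_nonneg
  have ht_zero : ⟪t, v⟫ = 0 := le_antisymm hneg_nonneg (hS.inner_nonneg ht hvC)
  obtain ⟨d, hd, rfl⟩ := hS.2.2.2 t ht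
  have hd_zero : ∀ γ ∈ S, γ ≠ β → d γ = 0 := by
    simp only [sum_inner, real_inner_smul_left] at ht_zero
    intro γ hγ hγβ
    have := (Finset.sum_eq_zero_iff_of_nonneg fun δ hδ => mul_nonneg (hd δ hδ) (hvC δ hδ)).1
      ht_zero γ hγ
    rwa [hv γ hγ, if_neg hγβ, mul_one] at this
  have hsum : ∑ γ ∈ S, d γ • γ = d β • β :=
    Finset.sum_eq_single_of_mem β hβ fun γ hγ hγβ => by rw [hd_zero γ hγ hγβ, zero_smul]
  rw [hsum] at ht hne
  exact hne (hS.eq_of_smul_mem hR hpos hβ ht)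

lemma inner_nonpos (hS : IsSimpleSystem Rpos S) (hR : IsRootSystem R)
    (hpos : IsPositiveSystem R Rpos) {β γ : E} (hβ : β ∈ S) (hγ : γ ∈ S) (hne : β ≠ γ) :
    ⟪β, γ⟫ ≤ 0 := by
  classical
  obtain ⟨v, hv⟩ := exists_inner_eq_of_linearIndependent hS.2.1 fun δ => if δ = β then 1 else 0
  have hvC : v ∈ closedChamber S := fun δ hδ => by
    rw [hv δ hδ]
    split_ifs <;> norm_num
  have := hS.inner_nonneg (hS.sRefl_mem hR hpos hβ (hS.1 hγ) hne.symm) hvC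
  rw [sRefl, inner_sub_left, real_inner_smul_left, hv β hβ, hv γ hγ, if_pos rfl,
    if_neg hne.symm] at this
  linarith

lemma exists_word_sRefl (hS : IsSimpleSystem Rpos S) (hR : IsRootSystem R)
    (hpos : IsPositiveSystem R Rpos) {r : E} (hr : r ∈ Rpos) :
    ∃ l : List E, (∀ b ∈ l, b ∈ S) ∧ ∀ x, sRefl r x = applyWord l x := by
  classical
  obtain ⟨u, -, hu⟩ := id hpos
  induction hn : (Rpos.filter fun r' => ⟪r', u⟫ < ⟪r, u⟫).card
    using Nat.strong_induction_on generalizing r with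
  | _ n ih =>
  by_cases hrS : r ∈ S
  · exact ⟨[r], by simpa using hrS, fun x => rfl⟩
  obtain ⟨β, hβ, hβr⟩ := hS.exists_inner_pos hR hpos hr
  have hβ1 := hS.norm_eq_one hR hpos hβ
  have hr' : sRefl β r ∈ Rpos := hS.sRefl_mem hR hpos hβ hr fun h => hrS (h ▸ hβ)
  have hlt : ⟪sRefl β r, u⟫ < ⟪r, u⟫ := by
    rw [sRefl, inner_sub_left, real_inner_smul_left]
    nlinarith [((hu β).1 (hS.1 hβ)).2]
  have hcard : (Rpos.filter fun r' => ⟪r', u⟫ < ⟪sRefl β r, u⟫).card < n := by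
    refine hn ▸ Finset.card_lt_card ((Finset.ssubset_iff_of_subset ?_).2 ⟨sRefl β r, ?_, ?_⟩)
    · intro r' h
      simp only [Finset.mem_filter] at h ⊢
      exact ⟨h.1, h.2.trans hlt⟩
    · simp [hr', hlt]
    · simp
  obtain ⟨l, hl, hlr⟩ := ih _ hcard hr' rfl
  refine ⟨β :: (l ++ [β]), fun b hb => ?_, fun x => ?_⟩
  · simp only [List.mem_cons, List.mem_append, List.not_mem_nil, or_false] at hb
    rcases hb with rfl | hb | rfl
    exacts [hβ, hl b hb, hβ]
  · -- `s_r = s_β s_{s_β r} s_β`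
    rw [applyWord_cons, applyWord_append, ← hlr, applyWord_cons, applyWord_nil,
      sRefl_sRefl_eq hβ1, sRefl_sRefl hβ1, sRefl_sRefl hβ1]

lemma exists_word_of_mem_weylGroup (hS : IsSimpleSystem Rpos S) (hR : IsRootSystem R)
    (hpos : IsPositiveSystem R Rpos) {w : E ≃ₗᵢ[ℝ] E} (hw : w ∈ weylGroup R) :
    ∃ l : List E, (∀ b ∈ l, b ∈ S) ∧ ∀ x, w x = applyWord l x := by
  have hrefl : ∀ r ∈ R, ∃ l : List E, (∀ b ∈ l, b ∈ S) ∧ ∀ x, sRefl r x = applyWord l x := by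
    intro r hr
    by_cases hr' : r ∈ Rpos
    · exact hS.exists_word_sRefl hR hpos hr'
    · obtain ⟨l, hl, hlr⟩ := hS.exists_word_sRefl hR hpos ((hpos.neg_mem_iff hR hr).2 hr')
      exact ⟨l, hl, fun x => by rw [← sRefl_neg, hlr]⟩
  induction hw using Subgroup.closure_induction'' with
  | mem w hw =>
    obtain ⟨r, hr, hwr⟩ := hw
    obtain ⟨l, hl, hlr⟩ := hrefl r hr
    exact ⟨l, hl, fun x => (hwr x).trans (hlr x)⟩
  | inv_mem w hw =>
    obtain ⟨r, hr, hwr⟩ := hw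
    obtain ⟨l, hl, hlr⟩ := hrefl r hr
    refine ⟨l, hl, fun x => ?_⟩
    rw [← hlr, LinearIsometryEquiv.coe_inv, LinearIsometryEquiv.symm_apply_eq, hwr,
      sRefl_sRefl (hR.1 r hr)]
  | one => exact ⟨[], by simp, fun x => rfl⟩
  | mul a b _ _ iha ihb =>
    obtain ⟨la, hla, ha⟩ := iha
    obtain ⟨lb, hlb, hb⟩ := ihb
    refine ⟨la ++ lb, fun r hr => ?_, fun x => ?_⟩
    · rcases List.mem_append.1 hr with hr | hr
      exacts [hla r hr, hlb r hr]
    · rw [applyWord_append, ← ha, ← hb]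
      rfl

/-- The exchange property of the simple reflections. -/
lemma exists_shorter_word (hS : IsSimpleSystem Rpos S) (hR : IsRootSystem R)
    (hpos : IsPositiveSystem R Rpos) {β : E} (hβ : β ∈ S) :
    ∀ l : List E, (∀ r ∈ l, r ∈ S) → applyWord l β ∉ Rpos →
      ∃ l' : List E, (∀ r ∈ l', r ∈ S) ∧ l'.length ≤ l.length ∧
        ∀ x, applyWord (l ++ [β]) x = applyWord l' x
  | [], _, h => absurd (hS.1 hβ) h
  | γ :: m, hl, h => by
    rw [List.forall_mem_cons] at hl
    by_cases hm : applyWord m β ∈ Rpos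
    · have hmβ : applyWord m β = γ := by_contra fun hne => h (hS.sRefl_mem hR hpos hl.1 hm hne)
      refine ⟨m, hl.2, by simp, fun x => ?_⟩
      rw [List.cons_append, applyWord_cons, applyWord_append, applyWord_cons, applyWord_nil,
        applyWord_sRefl (fun r hr => hS.norm_eq_one hR hpos (hl.2 r hr)), hmβ,
        sRefl_sRefl (hS.norm_eq_one hR hpos hl.1)]
    · obtain ⟨m', hm', hlen, heq⟩ := hS.exists_shorter_word hR hpos hβ m hl.2 hm
      refine ⟨γ :: m', List.forall_mem_cons.2 ⟨hl.1, hm'⟩, by simpa using hlen, fun x => ?_⟩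
      rw [List.cons_append, applyWord_cons, heq, applyWord_cons]

lemma inner_applyWord_le (hS : IsSimpleSystem Rpos S) (hR : IsRootSystem R)
    (hpos : IsPositiveSystem R Rpos) {c y : E} (hc : c ∈ closedChamber S)
    (hy : y ∈ closedChamber S) (l : List E) (hl : ∀ r ∈ l, r ∈ S) :
    ⟪c, applyWord l y⟫ ≤ ⟪c, y⟫ := by
  induction hn : l.length using Nat.strong_induction_on generalizing l with
  | _ n ih =>
  obtain rfl | ⟨m, β, rfl⟩ := l.eq_nil_or_concat'
  · exact le_rfl
  have hm : ∀ r ∈ m, r ∈ S := fun r hr => hl r (List.mem_append_left _ hr)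
  have hβ : β ∈ S := hl β (List.mem_append_right _ (List.mem_singleton_self β))
  have hm1 : ∀ r ∈ m, ‖r‖ = 1 := fun r hr => hS.norm_eq_one hR hpos (hm r hr)
  have hmn : m.length < n := by simp [← hn]
  by_cases hmβ : applyWord m β ∈ Rpos
  · calc ⟪c, applyWord (m ++ [β]) y⟫
          = ⟪c, applyWord m y⟫ - 2 * ⟪β, y⟫ * ⟪applyWord m β, c⟫ := by
            rw [applyWord_append, applyWord_cons, applyWord_nil, applyWord_sRefl hm1, sRefl,
              inner_sub_right, real_inner_smul_right, inner_applyWord_applyWord hm1,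
              real_inner_comm c]
      _ ≤ ⟪c, applyWord m y⟫ := by nlinarith [hy β hβ, hS.inner_nonneg hmβ hc]
      _ ≤ ⟪c, y⟫ := ih m.length hmn m hm rfl
  · obtain ⟨m', hm', hlen, heq⟩ := hS.exists_shorter_word hR hpos hβ m hm hmβ
    rw [heq]
    exact ih m'.length (hlen.trans_lt hmn) m' hm' rfl

lemma inner_le_of_mem_weylGroup (hS : IsSimpleSystem Rpos S) (hR : IsRootSystem R)
    (hpos : IsPositiveSystem R Rpos) {w : E ≃ₗᵢ[ℝ] E} (hw : w ∈ weylGroup R) {c y : E}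
    (hc : c ∈ closedChamber S) (hy : y ∈ closedChamber S) : ⟪c, w y⟫ ≤ ⟪c, y⟫ := by
  obtain ⟨l, hl, hwl⟩ := hS.exists_word_of_mem_weylGroup hR hpos hw
  rw [hwl]
  exact hS.inner_applyWord_le hR hpos hc hy l hl

lemma inner_le_dist (hS : IsSimpleSystem Rpos S) (hR : IsRootSystem R)
    (hpos : IsPositiveSystem R Rpos) {α : E} (hα : ‖α‖ = 1) {w : E ≃ₗᵢ[ℝ] E}
    (hw : w ∈ weylGroup R) {c y : E} (hc : c ∈ closedChamber S) (hy : y ∈ faceF S α) :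
    ⟪α, c⟫ ≤ dist c (w y) := by
  have hle : ‖c - y‖ ≤ ‖c - w y‖ := by
    have := hS.inner_le_of_mem_weylGroup hR hpos hw hc (faceF_subset_closedChamber S α hy)
    rw [← sq_le_sq₀ (norm_nonneg _) (norm_nonneg _), norm_sub_sq_real, norm_sub_sq_real,
      w.norm_map]
    linarith
  calc ⟪α, c⟫ = ⟪α, c - y⟫ := by rw [inner_sub_right, hy.1, sub_zero]
    _ ≤ ‖α‖ * ‖c - y‖ := real_inner_le_norm _ _
    _ = dist c y := by rw [hα, one_mul, dist_eq_norm]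
    _ ≤ dist c (w y) := by rwa [dist_eq_norm, dist_eq_norm]

lemma exists_mem_faceF_dist_le (hS : IsSimpleSystem Rpos S) (hR : IsRootSystem R)
    (hpos : IsPositiveSystem R Rpos) {α : E} (hα : α ∈ S) {c : E} (hc : c ∈ closedChamber S)
    {ε : ℝ} (hε : 0 < ε) : ∃ y ∈ faceF S α, dist c y ≤ ⟪α, c⟫ + ε := by
  classical
  obtain ⟨v, hv⟩ := exists_inner_eq_of_linearIndependent hS.2.1 fun β => if β = α then 0 else 1
  have hα1 := hS.norm_eq_one hR hpos hα
  set t := ε / (‖v‖ + 1)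
  have ht : 0 < t := by positivity
  refine ⟨c - ⟪α, c⟫ • α + t • v, ⟨?_, fun β hβ hne => ?_⟩, ?_⟩
  · rw [inner_add_right, inner_sub_right, real_inner_smul_right, real_inner_smul_right,
      inner_self_eq_one_of_norm_eq_one hα1, hv α hα, if_pos rfl]
    ring
  · have := hS.inner_nonpos hR hpos hβ hα hne
    rw [inner_add_right, inner_sub_right, real_inner_smul_right, real_inner_smul_right,
      hv β hβ, if_neg hne]
    nlinarith [hc β hβ, hc α hα]
  · rw [dist_eq_norm, show c - (c - ⟪α, c⟫ • α + t • v) = ⟪α, c⟫ • α - t • v by abel]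
    calc ‖⟪α, c⟫ • α - t • v‖ ≤ ‖⟪α, c⟫ • α‖ + ‖t • v‖ := norm_sub_le _ _
      _ = ⟪α, c⟫ + t * ‖v‖ := by
        rw [norm_smul, norm_smul, hα1, mul_one, Real.norm_of_nonneg (hc α hα),
          Real.norm_of_nonneg ht.le]
      _ ≤ ⟪α, c⟫ + ε := by
        gcongr
        rw [div_mul_eq_mul_div, div_le_iff₀ (by positivity)]
        nlinarith [norm_nonneg v]

end IsSimpleSystem

end RootSystem

/-- for a simple root `α`, `α·π(x)` equals the distance from `x` to
`K_α = ∪_{w ∈ W} w(F_α)`. -/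
theorem inner_projection_eq_dist (R Rpos S : Finset V) (hR : IsRootSystem R)
    (hpos : IsPositiveSystem R Rpos) (hS : IsSimpleSystem Rpos S)
    (α : V) (hα : α ∈ S) (pi : V → V)
    (hpi : ∀ x : V, pi x ∈ closedChamber S ∧ ∃ w ∈ weylGroup R, w x = pi x) :
    ∀ x : V, ⟪α, pi x⟫ =
      Metric.infDist x (⋃ w ∈ weylGroup R, (w : V → V) '' faceF S α) := by
  intro x
  obtain ⟨hc, w, hw, hwx⟩ := hpi x
  refine le_antisymm ?_ ?_
  · obtain ⟨y, hy, -⟩ := hS.exists_mem_faceF_dist_le hR hpos hα hc one_pos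
    refine (le_infDist ⟨w y, mem_iUnion₂.2 ⟨w, hw, mem_image_of_mem _ hy⟩⟩).2 fun _ hz => ?_
    obtain ⟨g, hg, y, hy, rfl⟩ := mem_iUnion₂.1 hz
    rw [← w.dist_map, hwx]
    exact hS.inner_le_dist hR hpos (hS.norm_eq_one hR hpos hα) (mul_mem hw hg) hc hy
  · refine le_of_forall_pos_le_add fun ε hε => ?_
    obtain ⟨y, hy, hdist⟩ := hS.exists_mem_faceF_dist_le hR hpos hα hc hε
    calc infDist x _ ≤ dist x (w⁻¹ y) :=
          infDist_le_dist_of_mem (mem_iUnion₂.2 ⟨w⁻¹, inv_mem hw, mem_image_of_mem _ hy⟩)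
      _ = dist (pi x) y := by
          rw [← w.dist_map, LinearIsometryEquiv.coe_inv, w.apply_symm_apply, hwx]
      _ ≤ ⟪α, pi x⟫ + ε := hdist
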